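/- Integration by parts for the curl operator on a rectangular box with explicit boundary term: let a b : ℝ³ with a i < b i for each i, and let C, D : ℝ³ → ℝ³ be continuously differentiable on an open neighborhood of the closed box Icc a b. Then ∫ x in Icc a b, (⟪curl C x, D x⟫ − ⟪C x, curl D x⟫) equals the outward flux of the field x ↦ C x × D x through the boundary of the box, namely the sum over i ∈ Fin 3 of (the integral of the i-th component of C × D over the face { x ∈ Icc a b : x i = b i }) minus (the integral of the i-th component of C × D over the face { x ∈ Icc a b : x i = a i }), each face integral taken with respect to the (2-dimensional) Lebesgue measure on the face. -/

import Mathlib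

noncomputable section

/-- `ℝ³`, here realized as functions `Fin 3 → ℝ` (equivalently `EuclideanSpace ℝ (Fin 3)`). -/
abbrev V3 : Type := Fin 3 → ℝ

/-- The Euclidean inner product on `ℝ³`. -/
def inner3 (u v : V3) : ℝ := ∑ i, u i * v i

/-- Partial derivative of a vector field in the `i`-th coordinate direction,
computed via `fderiv ℝ`. -/
def pd (i : Fin 3) (F : V3 → V3) (x : V3) : V3 :=
  fderiv ℝ F x (Pi.single i 1)

/-- The curl of a vector field on `ℝ³`: with coordinates indexed by `0, 1, 2`, its
components are `(∂₁F₂ − ∂₂F₁, ∂₂F₀ − ∂₀F₂, ∂₀F₁ − ∂₁F₀)`. -/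
def curl3 (F : V3 → V3) (x : V3) : V3 :=
  ![pd 1 F x 2 - pd 2 F x 1,
    pd 2 F x 0 - pd 0 F x 2,
    pd 0 F x 1 - pd 1 F x 0]

/-- The integral of `G` over the face `{x ∈ Icc a b : x i = c}` of the box `Icc a b`
(for `c = a i` or `c = b i`), with respect to the 2-dimensional Lebesgue measure on
the face: the face is parametrized orthonormally by its remaining two coordinates. -/
def faceIntegral (G : V3 → ℝ) (a b : V3) (i : Fin 3) (c : ℝ) : ℝ :=
  ∫ y : Fin 2 → ℝ in Set.Icc (a ∘ i.succAbove) (b ∘ i.succAbove), G (i.insertNth c y)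

/-!
The divergence of `C × D` is `⟪curl C, D⟫ - ⟪C, curl D⟫` (a pointwise algebraic identity
once the product rule for `×` is applied), so the theorem is the divergence theorem on the
box for the `C¹` field `C × D`, whose outward flux through the face `x i = c` is the integral
of its `i`-th component there.
-/

open MeasureTheory Set Matrix

def divergence {ι : Type*} [Fintype ι] [DecidableEq ι] (F : (ι → ℝ) → ι → ℝ) (x : ι → ℝ) : ℝ :=
  ∑ i, fderiv ℝ F x (Pi.single i 1) i

theorem integral_divergence_of_contDiffOn {n : ℕ} {a b : Fin (n + 1) → ℝ} (hle : a ≤ b)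
    {U : Set (Fin (n + 1) → ℝ)} (hU : IsOpen U) (hUab : Icc a b ⊆ U)
    {F : (Fin (n + 1) → ℝ) → Fin (n + 1) → ℝ} (hF : ContDiffOn ℝ 1 F U) :
    ∫ x in Icc a b, divergence F x =
      ∑ i : Fin (n + 1),
        ((∫ y in Icc (a ∘ i.succAbove) (b ∘ i.succAbove), F (i.insertNth (b i) y) i) -
          ∫ y in Icc (a ∘ i.succAbove) (b ∘ i.succAbove), F (i.insertNth (a i) y) i) := by
  have hF' : ContinuousOn (fderiv ℝ F) U := hF.continuousOn_fderiv_of_isOpen hU le_rfl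
  have hdiv : ContinuousOn (divergence F) U := by
    unfold divergence
    fun_prop
  refine integral_divergence_of_hasFDerivAt_off_countable a b hle F (fderiv ℝ F) ∅ countable_empty
    (hF.continuousOn.mono hUab) (fun x hx => ?_) ((hdiv.mono hUab).integrableOn_compact isCompact_Icc)
  have hxU : x ∈ U := hUab (Ioo_subset_Icc_self (pi_univ_Ioo_subset a b hx.1))
  exact ((hF.differentiableOn one_ne_zero).differentiableAt (hU.mem_nhds hxU)).hasFDerivAt

def crossL : V3 →L[ℝ] V3 →L[ℝ] V3 :=
  (crossProduct : V3 →ₗ[ℝ] V3 →ₗ[ℝ] V3).toContinuousBilinearMap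

theorem ContDiffOn.cross {n : WithTop ℕ∞} {s : Set V3} {C D : V3 → V3}
    (hC : ContDiffOn ℝ n C s) (hD : ContDiffOn ℝ n D s) :
    ContDiffOn ℝ n (fun x => C x ⨯₃ D x) s :=
  (crossL.contDiff.comp_contDiffOn hC).clm_apply hD

theorem fderiv_cross_apply {C D : V3 → V3} {x : V3} (hC : DifferentiableAt ℝ C x)
    (hD : DifferentiableAt ℝ D x) (v : V3) :
    fderiv ℝ (fun y => C y ⨯₃ D y) x v = C x ⨯₃ fderiv ℝ D x v + fderiv ℝ C x v ⨯₃ D x :=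
  DFunLike.congr_fun (crossL.fderiv_of_bilinear hC hD) v

theorem divergence_cross {C D : V3 → V3} {x : V3} (hC : DifferentiableAt ℝ C x)
    (hD : DifferentiableAt ℝ D x) :
    divergence (fun y => C y ⨯₃ D y) x = inner3 (curl3 C x) (D x) - inner3 (C x) (curl3 D x) := by
  simp only [divergence, fderiv_cross_apply hC hD]
  simp only [inner3, curl3, pd, cross_apply, Fin.sum_univ_three, Pi.add_apply, cons_val_zero,
    cons_val_one, cons_val_two, head_cons, tail_cons]
  ring

/-- Integration by parts for the curl operator on a rectangular box, with the boundary
term expressed as the outward flux of `C × D` through the six faces of the box. -/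
theorem curl_integration_by_parts_box (a b : V3) (hab : ∀ i, a i < b i)
    (U : Set V3) (hU : IsOpen U) (hUab : Set.Icc a b ⊆ U)
    (C D : V3 → V3) (hC : ContDiffOn ℝ 1 C U) (hD : ContDiffOn ℝ 1 D U) :
    ∫ x in Set.Icc a b, (inner3 (curl3 C x) (D x) - inner3 (C x) (curl3 D x)) =
      ∑ i : Fin 3,
        (faceIntegral (fun x => crossProduct (C x) (D x) i) a b i (b i)
          - faceIntegral (fun x => crossProduct (C x) (D x) i) a b i (a i)) := by
  have differentiableAt {F : V3 → V3} (hF : ContDiffOn ℝ 1 F U) {x : V3} (hx : x ∈ Icc a b) :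
      DifferentiableAt ℝ F x :=
    (hF.differentiableOn one_ne_zero).differentiableAt (hU.mem_nhds (hUab hx))
  calc ∫ x in Icc a b, (inner3 (curl3 C x) (D x) - inner3 (C x) (curl3 D x))
      = ∫ x in Icc a b, divergence (fun y => C y ⨯₃ D y) x :=
        setIntegral_congr_fun measurableSet_Icc fun x hx =>
          (divergence_cross (differentiableAt hC hx) (differentiableAt hD hx)).symm
    _ = _ := integral_divergence_of_contDiffOn (fun i => (hab i).le) hU hUab (hC.cross hD)
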